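/- Let L be the loss function of an n-shortcut network whose activation functions σ_pre, σ_mid, σ_post are C^∞ with σ_mid(0) = σ_post(0) = 0. Fix two parameters w₁ = w^{r₁,l₁}_{i₁,j₁} and w₂ = w^{r₂,l₂}_{i₂,j₂} with r₁ ≤ r₂, and let L₀(w₁, w₂) denote L viewed as a function of w₁ and w₂ alone, with all other parameters set to 0. Let w₁' = w^{1,l₁}_{i₁,j₁} and w₂' = w^{1+𝟙(r₁≠r₂), l₂}_{i₂,j₂} (i.e., the same layer/row/column indices but with the two residual units relocated to unit 1, and unit 2 if r₁ ≠ r₂), and let L₀'(w₁', w₂') be defined analogously. Then ∂²L₀/∂w₁∂w₂ evaluated at (w₁,w₂) = (0,0) equals ∂²L₀'/∂w₁'∂w₂' evaluated at (w₁',w₂') = (0,0). -/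
import Mathlib


noncomputable section

open scoped BigOperators

/-- Entrywise application of a scalar function to a vector. -/
def emap {d : ℕ} (σ : ℝ → ℝ) (v : Fin d → ℝ) : Fin d → ℝ := fun i => σ (v i)

/-- Matrix–vector product. -/
def mvec {d : ℕ} (M : Fin d → Fin d → ℝ) (v : Fin d → ℝ) : Fin d → ℝ :=
  fun i => ∑ j, M i j * v j

/-- The transformation path with `k` weight matrices applied to `v`:
`a₁ = W₀ v`, `a_{l+1} = W_l σmid.(a_l)`; `chain σmid W k v = a_k`. -/
def chain {d : ℕ} (σmid : ℝ → ℝ) (W : ℕ → Fin d → Fin d → ℝ) :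
    ℕ → (Fin d → ℝ) → (Fin d → ℝ)
  | 0, v => v
  | k + 1, v => mvec (W k) (if k = 0 then v else emap σmid (chain σmid W k v))

/-- One residual unit of an `n`-shortcut network:
`u(x) = σpost.(Wⁿ σmid.(⋯ σmid.(W¹ σpre.(x)))) + x`. -/
def resUnit {d : ℕ} (σpre σmid σpost : ℝ → ℝ) (n : ℕ) (W : ℕ → Fin d → Fin d → ℝ)
    (x : Fin d → ℝ) : Fin d → ℝ :=
  fun i => σpost (chain σmid W n (emap σpre x) i) + x i

/-- The `n`-shortcut network with `R` residual units: composition `u_R ∘ ⋯ ∘ u_1`. -/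
def net {d : ℕ} (σpre σmid σpost : ℝ → ℝ) (n : ℕ) (W : ℕ → ℕ → Fin d → Fin d → ℝ) :
    ℕ → (Fin d → ℝ) → (Fin d → ℝ)
  | 0, x => x
  | r + 1, x => resUnit σpre σmid σpost n (W r) (net σpre σmid σpost n W r x)

/-- Extend finitely indexed weights to ℕ-indexed weights (by zero out of range). -/
def extendW {R n d : ℕ} (W : Fin R → Fin n → Fin d → Fin d → ℝ) :
    ℕ → ℕ → Fin d → Fin d → ℝ :=
  fun r l => if h : r < R ∧ l < n then W ⟨r, h.1⟩ ⟨l, h.2⟩ else 0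

/-- The loss function of an `n`-shortcut network with `R` residual units,
as a function of the collection of all the weight matrices. -/
def loss {d m : ℕ} (σpre σmid σpost : ℝ → ℝ) (n R : ℕ) (X Y : Fin m → Fin d → ℝ)
    (W : Fin R → Fin n → Fin d → Fin d → ℝ) : ℝ :=
  (1 / (2 * (m : ℝ))) *
    ∑ μ : Fin m, ∑ i, (net σpre σmid σpost n (extendW W) R (X μ) i - Y μ i) ^ 2

/-- The coordinate direction in weight space corresponding to the parameter `w^{r,l}_{i,j}`. -/
def coordDir (R n d : ℕ) (r : Fin R) (l : Fin n) (i j : Fin d) :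
    Fin R → Fin n → Fin d → Fin d → ℝ :=
  fun r' l' i' j' => if r' = r ∧ l' = l ∧ i' = i ∧ j' = j then 1 else 0

/-- Second-order partial derivative of `f` at `0` along the directions `v₁, v₂`. -/
def d2 {E : Type*} [NormedAddCommGroup E] [NormedSpace ℝ E] (f : E → ℝ) (v₁ v₂ : E) : ℝ :=
  fderiv ℝ (fun w => fderiv ℝ f w v₂) (0 : E) v₁


lemma chain_last_zero {d : ℕ} (σmid : ℝ → ℝ) (W : ℕ → Fin d → Fin d → ℝ) (k : ℕ)
    (h : W k = 0) (v : Fin d → ℝ) : chain σmid W (k+1) v = fun _ => 0 := by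
  funext i
  simp [chain, h, mvec]

lemma resUnit_id {d : ℕ} (σpre σmid σpost : ℝ → ℝ) (hpost0 : σpost 0 = 0) {n : ℕ}
    (hn : 0 < n) (W : ℕ → Fin d → Fin d → ℝ) (h : W (n-1) = 0) (x : Fin d → ℝ) :
    resUnit σpre σmid σpost n W x = x := by
  obtain ⟨k, rfl⟩ : ∃ k, n = k + 1 := ⟨n - 1, (Nat.succ_pred_eq_of_pos hn).symm⟩
  simp only [Nat.add_sub_cancel] at h
  funext i
  simp [resUnit, chain_last_zero σmid W k h (emap σpre x), hpost0]

lemma net_skip {d n : ℕ} (σpre σmid σpost : ℝ → ℝ) (hpost0 : σpost 0 = 0) (hn : 0 < n)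
    (W : ℕ → ℕ → Fin d → Fin d → ℝ) (x : Fin d → ℝ) {s t : ℕ} (hst : s ≤ t)
    (h : ∀ r, s ≤ r → r < t → W r (n-1) = 0) :
    net σpre σmid σpost n W t x = net σpre σmid σpost n W s x := by
  induction t, hst using Nat.le_induction with
  | base => rfl
  | succ t ht ih =>
    have h1 : net σpre σmid σpost n W (t+1) x
        = resUnit σpre σmid σpost n (W t) (net σpre σmid σpost n W t x) := rfl
    rw [h1, resUnit_id σpre σmid σpost hpost0 hn _ (h t ht (Nat.lt_succ_self t))]
    exact ih fun r hr hr' => h r hr (Nat.lt_succ_of_lt hr')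

lemma net_one {d n : ℕ} (σpre σmid σpost : ℝ → ℝ) (hpost0 : σpost 0 = 0) (hn : 0 < n)
    (W : ℕ → ℕ → Fin d → Fin d → ℝ) (p R : ℕ) (hpR : p < R)
    (h : ∀ r, r ≠ p → W r (n-1) = 0) (x : Fin d → ℝ) :
    net σpre σmid σpost n W R x = resUnit σpre σmid σpost n (W p) x := by
  have h1 : net σpre σmid σpost n W R x = net σpre σmid σpost n W (p+1) x :=
    net_skip σpre σmid σpost hpost0 hn W x hpR
      (fun r hr _ => h r (by omega))
  have h2 : net σpre σmid σpost n W (p+1) x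
      = resUnit σpre σmid σpost n (W p) (net σpre σmid σpost n W p x) := rfl
  have h3 : net σpre σmid σpost n W p x = net σpre σmid σpost n W 0 x :=
    net_skip σpre σmid σpost hpost0 hn W x (Nat.zero_le p)
      (fun r _ hr => h r (by omega))
  rw [h1, h2, h3]; rfl

lemma net_two {d n : ℕ} (σpre σmid σpost : ℝ → ℝ) (hpost0 : σpost 0 = 0) (hn : 0 < n)
    (W : ℕ → ℕ → Fin d → Fin d → ℝ) (p q R : ℕ) (hpq : p < q) (hqR : q < R)
    (h : ∀ r, r ≠ p → r ≠ q → W r (n-1) = 0) (x : Fin d → ℝ) :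
    net σpre σmid σpost n W R x
      = resUnit σpre σmid σpost n (W q) (resUnit σpre σmid σpost n (W p) x) := by
  have h1 : net σpre σmid σpost n W R x = net σpre σmid σpost n W (q+1) x :=
    net_skip σpre σmid σpost hpost0 hn W x hqR
      (fun r hr _ => h r (by omega) (by omega))
  have h2 : net σpre σmid σpost n W (q+1) x
      = resUnit σpre σmid σpost n (W q) (net σpre σmid σpost n W q x) := rfl
  have h3 : net σpre σmid σpost n W q x = net σpre σmid σpost n W (p+1) x :=
    net_skip σpre σmid σpost hpost0 hn W x hpq
      (fun r hr hr' => h r (by omega) (by omega))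
  have h4 : net σpre σmid σpost n W (p+1) x
      = resUnit σpre σmid σpost n (W p) (net σpre σmid σpost n W p x) := rfl
  have h5 : net σpre σmid σpost n W p x = net σpre σmid σpost n W 0 x :=
    net_skip σpre σmid σpost hpost0 hn W x (Nat.zero_le p)
      (fun r _ hr => h r (by omega) (by omega))
  rw [h1, h2, h3, h4, h5]; rfl

lemma extendW_two_apply {R n d : ℕ} (p q : Fin R) (l₁ l₂ : Fin n) (i₁ j₁ i₂ j₂ : Fin d)
    (a b : ℝ) (r l : ℕ) (i j : Fin d) :
    extendW (a • coordDir R n d p l₁ i₁ j₁ + b • coordDir R n d q l₂ i₂ j₂) r l i j =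
      (if r = p.val ∧ l = l₁.val ∧ i = i₁ ∧ j = j₁ then a else 0) +
      (if r = q.val ∧ l = l₂.val ∧ i = i₂ ∧ j = j₂ then b else 0) := by
  unfold extendW coordDir
  by_cases hrl : r < R ∧ l < n
  · rw [dif_pos hrl]
    simp only [Pi.add_apply, Pi.smul_apply, smul_eq_mul, Fin.ext_iff, Fin.mk.injEq]
    split_ifs <;> simp_all
  · rw [dif_neg hrl]
    have hp := p.isLt
    have hq := q.isLt
    have hl1 := l₁.isLt
    have hl2 := l₂.isLt
    rw [if_neg (by rintro ⟨h1, h2, -⟩; exact hrl ⟨by omega, by omega⟩),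
        if_neg (by rintro ⟨h1, h2, -⟩; exact hrl ⟨by omega, by omega⟩)]
    simp

/-- Lemma 4: translation invariance of second partials across residual units.
For parameters `w₁ = w^{r₁,l₁}_{i₁,j₁}` and `w₂ = w^{r₂,l₂}_{i₂,j₂}` with `r₁ ≤ r₂`, let
`L₀(a,b)` be the loss with all parameters other than `w₁, w₂` set to `0`.  Relocating the two
residual units to unit `1` (and unit `2` if `r₁ ≠ r₂`; in `Fin R` these are indices `0` and `1`)
does not change `∂²L₀/∂w₁∂w₂` at `(0,0)`. -/
theorem second_partial_translation_invariance
    {dx m R n : ℕ}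
    (σpre σmid σpost : ℝ → ℝ)
    (hpre : ContDiff ℝ (⊤ : ℕ∞) σpre) (hmid : ContDiff ℝ (⊤ : ℕ∞) σmid) (hpost : ContDiff ℝ (⊤ : ℕ∞) σpost)
    (hmid0 : σmid 0 = 0) (hpost0 : σpost 0 = 0)
    (X Y : Fin m → Fin dx → ℝ)
    (r₁ r₂ : Fin R) (l₁ l₂ : Fin n) (i₁ j₁ i₂ j₂ : Fin dx) (hle : r₁ ≤ r₂) :
    deriv (fun a : ℝ => deriv (fun b : ℝ =>
        loss σpre σmid σpost n R X Y
          (a • coordDir R n dx r₁ l₁ i₁ j₁ + b • coordDir R n dx r₂ l₂ i₂ j₂)) 0) 0 =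
    deriv (fun a : ℝ => deriv (fun b : ℝ =>
        loss σpre σmid σpost n R X Y
          (a • coordDir R n dx ⟨0, r₁.pos⟩ l₁ i₁ j₁ +
           b • coordDir R n dx
             (if h : r₁ = r₂ then ⟨0, r₁.pos⟩
              else ⟨1, by
                have h2 := r₂.isLt
                have h3 : r₁ < r₂ := lt_of_le_of_ne hle h
                have h4 := Fin.lt_iff_val_lt_val.mp h3
                omega⟩) l₂ i₂ j₂)) 0) 0 := by
  have hn : 0 < n := l₁.pos
  have hR : 0 < R := r₁.pos
  by_cases hrr : r₁ = r₂
  · simp only [dif_pos hrr]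
    subst hrr
    have hnet : ∀ (a b : ℝ) (x : Fin dx → ℝ),
        net σpre σmid σpost n
          (extendW (a • coordDir R n dx r₁ l₁ i₁ j₁ + b • coordDir R n dx r₁ l₂ i₂ j₂)) R x
        = net σpre σmid σpost n
          (extendW (a • coordDir R n dx ⟨0, r₁.pos⟩ l₁ i₁ j₁ +
                    b • coordDir R n dx ⟨0, r₁.pos⟩ l₂ i₂ j₂)) R x := by
      intro a b x
      rw [net_one σpre σmid σpost hpost0 hn _ r₁.val R r₁.isLt
            (fun r hr => by
              funext i j
              rw [extendW_two_apply]
              simp [hr]) x,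
          net_one σpre σmid σpost hpost0 hn _ 0 R hR
            (fun r hr => by
              funext i j
              rw [extendW_two_apply]
              simp [hr]) x]
      have e1 : extendW (a • coordDir R n dx r₁ l₁ i₁ j₁ + b • coordDir R n dx r₁ l₂ i₂ j₂)
            r₁.val
          = extendW (a • coordDir R n dx ⟨0, r₁.pos⟩ l₁ i₁ j₁ +
                     b • coordDir R n dx ⟨0, r₁.pos⟩ l₂ i₂ j₂) 0 := by
        funext l i j
        rw [extendW_two_apply, extendW_two_apply]
        simp
      rw [e1]
    congr 1
    funext a
    congr 1
    funext b
    simp only [loss, hnet a b]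
  · simp only [dif_neg hrr]
    have hlt : r₁.val < r₂.val := Fin.lt_iff_val_lt_val.mp (lt_of_le_of_ne hle hrr)
    have hR2 : 1 < R := by have := r₂.isLt; omega
    have hnet : ∀ (a b : ℝ) (x : Fin dx → ℝ),
        net σpre σmid σpost n
          (extendW (a • coordDir R n dx r₁ l₁ i₁ j₁ + b • coordDir R n dx r₂ l₂ i₂ j₂)) R x
        = net σpre σmid σpost n
          (extendW (a • coordDir R n dx ⟨0, r₁.pos⟩ l₁ i₁ j₁ +
                    b • coordDir R n dx ⟨1, by omega⟩ l₂ i₂ j₂)) R x := by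
      intro a b x
      rw [net_two σpre σmid σpost hpost0 hn _ r₁.val r₂.val R hlt r₂.isLt
            (fun r hr1 hr2 => by
              funext i j
              rw [extendW_two_apply]
              simp [hr1, hr2]) x,
          net_two σpre σmid σpost hpost0 hn _ 0 1 R Nat.zero_lt_one hR2
            (fun r hr1 hr2 => by
              funext i j
              rw [extendW_two_apply]
              simp [hr1, hr2]) x]
      have e1 : extendW (a • coordDir R n dx r₁ l₁ i₁ j₁ + b • coordDir R n dx r₂ l₂ i₂ j₂)
            r₁.val
          = extendW (a • coordDir R n dx ⟨0, r₁.pos⟩ l₁ i₁ j₁ +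
                     b • coordDir R n dx ⟨1, by omega⟩ l₂ i₂ j₂) 0 := by
        funext l i j
        rw [extendW_two_apply, extendW_two_apply]
        have : r₁.val ≠ r₂.val := by omega
        simp [this]
      have e2 : extendW (a • coordDir R n dx r₁ l₁ i₁ j₁ + b • coordDir R n dx r₂ l₂ i₂ j₂)
            r₂.val
          = extendW (a • coordDir R n dx ⟨0, r₁.pos⟩ l₁ i₁ j₁ +
                     b • coordDir R n dx ⟨1, by omega⟩ l₂ i₂ j₂) 1 := by
        funext l i j
        rw [extendW_two_apply, extendW_two_apply]
        have : r₂.val ≠ r₁.val := by omega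
        simp [this]
      rw [e1, e2]
    congr 1
    funext a
    congr 1
    funext b
    simp only [loss, hnet a b]

end
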